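/- arXiv:2203.03172 — 3 statements merged into one kernel-verified Lean document; each statement's English description precedes it below -/
import Mathlib

section
/- Let g : ℝ³ → ℝ³ be g(l) = k·max(‖l‖-L,0)·l/‖l‖ with k, L > 0 and let l : ℝ → ℝ³ be differentiable with ‖l(t)‖ > L. If (d/dt) g(l(t)) = 0 for all t and ‖l(t)‖ ≠ L, then l̇(t) = 0. -/
open scoped RealInnerProductSpace

/-!
On a taut cable the force is `c • l` with `c = k (‖l‖ - L) / ‖l‖ > 0`, and its magnitude
`k (‖l‖ - L)` is affine in the length `‖l‖`. The force is nonzero, so its norm is differentiable,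
and a stationary force has a stationary norm; hence `‖l‖`, and with it `c`, is stationary at `t`.
The derivative of the force then reduces to `c(t) • l̇(t)`, which forces `l̇(t) = 0`.
-/

section

variable {F : Type*} [NormedAddCommGroup F] [InnerProductSpace ℝ F]

theorem HasDerivAt.norm {f : ℝ → F} {f' : F} {x : ℝ} (hf : HasDerivAt f f' x) (h0 : f x ≠ 0) :
    HasDerivAt (fun y => ‖f y‖) (⟪f x, f'⟫ / ‖f x‖) x := by
  have hsq := hf.norm_sq.sqrt (pow_ne_zero 2 (norm_ne_zero_iff.2 h0))
  simp only [Real.sqrt_sq (norm_nonneg _)] at hsq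
  convert hsq using 1
  field_simp

theorem eq_zero_of_hasDerivAt_smul_eq_zero {c : ℝ → ℝ} {f : ℝ → F} {f' : F} {t : ℝ}
    (hc : HasDerivAt c 0 t) (hf : HasDerivAt f f' t) (hct : c t ≠ 0)
    (h : HasDerivAt (fun s => c s • f s) 0 t) : f' = 0 := by
  simpa [hct] using (hc.smul hf).unique h

noncomputable def cableForce (k L : ℝ) (v : F) : F := (k * max (‖v‖ - L) 0 / ‖v‖) • v

theorem cableForce_of_le {k L : ℝ} {v : F} (hv : L ≤ ‖v‖) :
    cableForce k L v = (k * (‖v‖ - L) / ‖v‖) • v := by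
  rw [cableForce, max_eq_left (sub_nonneg.2 hv)]

theorem norm_cableForce_of_le {k L : ℝ} (hk : 0 ≤ k) {v : F} (hv0 : v ≠ 0) (hv : L ≤ ‖v‖) :
    ‖cableForce k L v‖ = k * (‖v‖ - L) := by
  have hv' : 0 < ‖v‖ := norm_pos_iff.2 hv0
  have hvL : 0 ≤ ‖v‖ - L := sub_nonneg.2 hv
  rw [cableForce_of_le hv, norm_smul, Real.norm_of_nonneg (by positivity)]
  field_simp

end

/-- If the taut elastic cable force `g(l) = k·max(‖l‖-L,0)·l/‖l‖` is constant
(`(d/dt) g(l(t)) = 0`) along a differentiable cable trajectory staying taut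
(`‖l(t)‖ > L`), then the cable vector derivative vanishes: `l̇(t) = 0`. -/
theorem stmt11 (k L : ℝ) (hk : 0 < k) (hL : 0 < L)
    (g : EuclideanSpace ℝ (Fin 3) → EuclideanSpace ℝ (Fin 3))
    (hg : g = fun l => (k * max (‖l‖ - L) 0 / ‖l‖) • l)
    (l : ℝ → EuclideanSpace ℝ (Fin 3)) (l' : EuclideanSpace ℝ (Fin 3)) (t : ℝ)
    (htaut : ∀ s, L < ‖l s‖)
    (hl : HasDerivAt l l' t)
    (hconst : HasDerivAt (fun s => g (l s)) 0 t) :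
    l' = 0 := by
  obtain rfl : g = cableForce k L := hg
  have hl0 (s : ℝ) : l s ≠ 0 := norm_pos_iff.1 (hL.trans (htaut s))
  have hforce (s : ℝ) : ‖cableForce k L (l s)‖ = k * (‖l s‖ - L) :=
    norm_cableForce_of_le hk.le (hl0 s) (htaut s).le
  have hnorm : HasDerivAt (fun s => ‖l s‖) 0 t := by
    have hforce0 : cableForce k L (l t) ≠ 0 := by
      rw [← norm_pos_iff, hforce]
      exact mul_pos hk (sub_pos.2 (htaut t))
    have h := ((hconst.norm hforce0).div_const k).add_const L
    rw [inner_zero_right, zero_div, zero_div] at h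
    refine h.congr_of_eventuallyEq (.of_forall fun s => ?_)
    simp only [hforce, mul_div_cancel_left₀ _ hk.ne', sub_add_cancel]
  have hcoef : HasDerivAt (fun s => k * (‖l s‖ - L) / ‖l s‖) 0 t := by
    have h := ((hnorm.sub_const L).const_mul k).div hnorm (norm_ne_zero_iff.2 (hl0 t))
    rwa [mul_zero, zero_mul, mul_zero, sub_zero, zero_div] at h
  refine eq_zero_of_hasDerivAt_smul_eq_zero hcoef hl ?_ ?_
  · exact (div_pos (mul_pos hk (sub_pos.2 (htaut t))) (hL.trans (htaut t))).ne'
  · simpa only [cableForce_of_le (htaut _).le] using hconst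
end

section
/- Let γ ∈ ℝ³ with γ^T e₃ = 0, γ ≠ 0. Define V₂(l) = ∫_{l₀}^{‖l‖} k max(τ-L,0) dτ - l^T γ + C with k, L > 0 and suitable constants l₀, C. Then V₂ attains its global minimum at the unique point l* = γ(1/k + L/‖γ‖), where the cable force k(‖l*‖-L) l*/‖l*‖ equals γ. -/
/-!
The integral term equals `k/2 · max(‖l‖ - L, 0)² + const`, and Cauchy–Schwarz gives
`⟪l, γ⟫ ≤ ‖l‖ ‖γ‖` with equality only on the ray through `γ`. This reduces the problem to
`φ(r) = k/2 · max(r - L, 0)² - r ‖γ‖`, which exceeds its value at `r* = L + ‖γ‖/k` by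
`(k(r - L) - ‖γ‖)²/(2k)` for `r > L` and by more than `‖γ‖²/(2k)` for `r ≤ L`. The only point on the
ray through `γ` with norm `r*` is `l*`.
-/

open intervalIntegral

theorem hasDerivAt_half_mul_max_sub_sq (k L x : ℝ) :
    HasDerivAt (fun t => k / 2 * max (t - L) 0 ^ 2) (k * max (x - L) 0) x := by
  refine hasDerivAt_of_hasDerivAt_of_ne' (x := L) (g := fun t => k * max (t - L) 0)
    (fun y hy => ?_) (by fun_prop) (by fun_prop) x
  rcases hy.lt_or_gt with hy | hy
  · have hzero : (fun t => k / 2 * max (t - L) 0 ^ 2) =ᶠ[nhds y] fun _ => 0 := by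
      filter_upwards [eventually_lt_nhds hy] with t ht
      simp [max_eq_right (sub_nonpos.2 ht.le)]
    rw [max_eq_right (sub_nonpos.2 hy.le), mul_zero]
    exact (hasDerivAt_const y 0).congr_of_eventuallyEq hzero
  · have hsq : (fun t => k / 2 * max (t - L) 0 ^ 2) =ᶠ[nhds y] fun t => k / 2 * (t - L) ^ 2 := by
      filter_upwards [eventually_gt_nhds hy] with t ht
      rw [max_eq_left (sub_nonneg.2 ht.le)]
    rw [max_eq_left (sub_nonneg.2 hy.le)]
    have := (((hasDerivAt_id' y).sub_const L).pow 2).const_mul (k / 2)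
    exact (this.congr_of_eventuallyEq hsq).congr_deriv (by ring)

theorem integral_mul_max_sub (k L a b : ℝ) :
    ∫ τ in a..b, k * max (τ - L) 0 = k / 2 * max (b - L) 0 ^ 2 - k / 2 * max (a - L) 0 ^ 2 :=
  integral_eq_sub_of_hasDerivAt (fun τ _ => hasDerivAt_half_mul_max_sub_sq k L τ)
    (Continuous.intervalIntegrable (by fun_prop) _ _)

theorem half_mul_max_sub_sq_sub_mul_lt {k L a r : ℝ} (hk : 0 < k) (ha : 0 < a)
    (hr : r ≠ L + a / k) :
    k / 2 * max (L + a / k - L) 0 ^ 2 - (L + a / k) * a < k / 2 * max (r - L) 0 ^ 2 - r * a := by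
  have hstar : k / 2 * max (L + a / k - L) 0 ^ 2 - (L + a / k) * a =
      -(a ^ 2 / (2 * k)) - L * a := by
    rw [add_sub_cancel_left, max_eq_left (by positivity)]
    field_simp
    ring
  rw [hstar]
  rcases le_or_gt r L with hrL | hrL
  · rw [max_eq_right (sub_nonpos.2 hrL)]
    nlinarith [show 0 < a ^ 2 / (2 * k) by positivity]
  · rw [max_eq_left (sub_nonneg.2 hrL.le)]
    have hgap : k * (r - L) - a ≠ 0 := by
      contrapose! hr
      field_simp
      linarith
    have hsq : k / 2 * (r - L) ^ 2 - r * a - (-(a ^ 2 / (2 * k)) - L * a) =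
        (k * (r - L) - a) ^ 2 / (2 * k) := by
      field_simp
      ring
    have : 0 < (k * (r - L) - a) ^ 2 / (2 * k) := by positivity
    linarith

section InnerProductSpace

variable {E : Type*} [NormedAddCommGroup E] [InnerProductSpace ℝ E]

theorem real_inner_lt_norm_mul_of_ne_smul {x y : E} {c : ℝ} (hy : y ≠ 0)
    (hx : ‖x‖ = c * ‖y‖) (hxy : x ≠ c • y) : inner ℝ x y < ‖x‖ * ‖y‖ := by
  refine (real_inner_le_norm x y).lt_of_ne fun h => hxy ?_
  have hy' : ‖y‖ ≠ 0 := norm_ne_zero_iff.2 hy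
  rw [inner_eq_norm_mul_iff_real, hx, mul_comm, mul_smul] at h
  exact smul_right_injective E hy' h

variable {k L : ℝ} {γ : E}

theorem norm_smul_cable_equilibrium (hk : 0 < k) (hL : 0 < L) (hγ : γ ≠ 0) :
    ‖(1 / k + L / ‖γ‖) • γ‖ = L + ‖γ‖ / k := by
  have hγ' : 0 < ‖γ‖ := norm_pos_iff.2 hγ
  rw [norm_smul, Real.norm_of_nonneg (by positivity)]
  field_simp
  ring

theorem cable_force_eq (hk : 0 < k) (hL : 0 < L) (hγ : γ ≠ 0) :
    (k * (‖(1 / k + L / ‖γ‖) • γ‖ - L) / ‖(1 / k + L / ‖γ‖) • γ‖) •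
      (1 / k + L / ‖γ‖) • γ = γ := by
  have hγ' : 0 < ‖γ‖ := norm_pos_iff.2 hγ
  rw [norm_smul_cable_equilibrium hk hL hγ, smul_smul]
  convert one_smul ℝ γ
  field_simp
  ring

theorem cable_potential_lt_of_ne (hk : 0 < k) (hL : 0 < L) (hγ : γ ≠ 0) (l₀ C : ℝ) {l : E}
    (hl : l ≠ (1 / k + L / ‖γ‖) • γ) :
    (∫ τ in l₀..‖(1 / k + L / ‖γ‖) • γ‖, k * max (τ - L) 0) -
        inner ℝ ((1 / k + L / ‖γ‖) • γ) γ + C <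
      (∫ τ in l₀..‖l‖, k * max (τ - L) 0) - inner ℝ l γ + C := by
  have hγ' : 0 < ‖γ‖ := norm_pos_iff.2 hγ
  have hinner : inner ℝ ((1 / k + L / ‖γ‖) • γ) γ = (L + ‖γ‖ / k) * ‖γ‖ := by
    rw [real_inner_smul_left, real_inner_self_eq_norm_sq]
    field_simp
    ring
  rw [integral_mul_max_sub, integral_mul_max_sub, norm_smul_cable_equilibrium hk hL hγ, hinner]
  by_cases hnorm : ‖l‖ = L + ‖γ‖ / k
  · have hlγ : ‖l‖ = (1 / k + L / ‖γ‖) * ‖γ‖ := by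
      rw [hnorm]
      field_simp
      ring
    have := real_inner_lt_norm_mul_of_ne_smul hγ hlγ hl
    rw [hnorm] at this ⊢
    linarith
  · linarith [half_mul_max_sub_sq_sub_mul_lt hk hγ' hnorm, real_inner_le_norm l γ]

end InnerProductSpace

theorem stmt13_general (k L : ℝ) (hk : 0 < k) (hL : 0 < L)
    (γ : EuclideanSpace ℝ (Fin 3)) (hγ : γ ≠ 0)
    (l₀ C : ℝ)
    (V₂ : EuclideanSpace ℝ (Fin 3) → ℝ)
    (hV₂ : V₂ = fun l => (∫ τ in l₀..‖l‖, k * max (τ - L) 0) - (inner ℝ l γ : ℝ) + C)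
    (lstar : EuclideanSpace ℝ (Fin 3)) (hlstar : lstar = (1 / k + L / ‖γ‖) • γ) :
    (k * (‖lstar‖ - L) / ‖lstar‖) • lstar = γ ∧
    ∀ l : EuclideanSpace ℝ (Fin 3), l ≠ lstar → V₂ lstar < V₂ l := by
  subst hV₂ hlstar
  exact ⟨cable_force_eq hk hL hγ, fun l hl => cable_potential_lt_of_ne hk hL hγ l₀ C hl⟩

/-- `V₂(l) = ∫_{l₀}^{‖l‖} k·max(τ-L,0) dτ - lᵀγ + C` attains its global minimum
at the unique point `l* = γ(1/k + L/‖γ‖)`, where the elastic cable force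
`k(‖l*‖-L)·l*/‖l*‖` equals `γ`. -/
theorem stmt13 (k L : ℝ) (hk : 0 < k) (hL : 0 < L)
    (γ : EuclideanSpace ℝ (Fin 3)) (hγ : γ ≠ 0) (hγz : γ 2 = 0)
    (l₀ C : ℝ)
    (V₂ : EuclideanSpace ℝ (Fin 3) → ℝ)
    (hV₂ : V₂ = fun l => (∫ τ in l₀..‖l‖, k * max (τ - L) 0) - (inner ℝ l γ : ℝ) + C)
    (lstar : EuclideanSpace ℝ (Fin 3)) (hlstar : lstar = (1 / k + L / ‖γ‖) • γ) :
    (k * (‖lstar‖ - L) / ‖lstar‖) • lstar = γ ∧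
    ∀ l : EuclideanSpace ℝ (Fin 3), l ≠ lstar → V₂ lstar < V₂ l :=
  stmt13_general k L hk hL γ hγ l₀ C V₂ hV₂ lstar hlstar
end

section
/- Consider the output-strict passivity inequality: for the coupled system with storage function V (kinetic energies plus cable elastic potential plus position-error energy), inputs (u_H, δ) and outputs (ṗ_H, ṗ_R), one has V̇ ≤ -y^T B y + y^T u where y = (ṗ_H, ṗ_R), u = (u_H, δ), and B = [[B_H, -½B_A],[-½B_A, B_A]]. In particular, if B_H - ¼B_A ≻ 0, the system is output-strictly passive. -/
/-!
Differentiating `V` term by term, the cable force `f_c` and `γ_ref` cancel between the kinetic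
energies and the elastic potential (using `v_Hᵀγ_ref = 0`), and the stiffness terms cancel between
`½v_RᵀM_A v_R` and `½e_RᵀK e_R`. What remains besides `yᵀu` is `-yᵀBy`, and completing the square,
`yᵀBy = v_Hᵀ(B_H - ¼B_A)v_H + (v_R - ½v_H)ᵀB_A(v_R - ½v_H) ≥ 0`.
-/

open Matrix

variable {ι 𝕜 : Type*} [Fintype ι] [NontriviallyNormedField 𝕜]

theorem HasDerivAt.dotProduct {f g : 𝕜 → ι → 𝕜} {f' g' : ι → 𝕜} {t : 𝕜}
    (hf : HasDerivAt f f' t) (hg : HasDerivAt g g' t) :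
    HasDerivAt (fun s => f s ⬝ᵥ g s) (f' ⬝ᵥ g t + f t ⬝ᵥ g') t := by
  rw [hasDerivAt_pi] at hf hg
  have := HasDerivAt.fun_sum fun i (_ : i ∈ Finset.univ) => (hf i).fun_mul (hg i)
  simpa only [_root_.dotProduct, Finset.sum_add_distrib] using this

theorem HasDerivAt.mulVec {m : Type*} (A : Matrix m ι 𝕜) {f : 𝕜 → ι → 𝕜} {f' : ι → 𝕜}
    {t : 𝕜} (hf : HasDerivAt f f' t) : HasDerivAt (fun s => A *ᵥ f s) (A *ᵥ f') t :=
  hasDerivAt_pi.mpr fun i =>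
    ((hasDerivAt_const t (A i)).dotProduct hf).congr_deriv (by simp [Matrix.mulVec])

theorem Matrix.IsSymm.dotProduct_mulVec_comm {A : Matrix ι ι 𝕜} (hA : A.IsSymm) (x y : ι → 𝕜) :
    x ⬝ᵥ A *ᵥ y = y ⬝ᵥ A *ᵥ x := by
  rw [dotProduct_mulVec, ← mulVec_transpose, hA.eq, dotProduct_comm]

theorem HasDerivAt.dotProduct_mulVec_self {A : Matrix ι ι 𝕜} (hA : A.IsSymm)
    {f : 𝕜 → ι → 𝕜} {f' : ι → 𝕜} {t : 𝕜} (hf : HasDerivAt f f' t) :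
    HasDerivAt (fun s => f s ⬝ᵥ A *ᵥ f s) (2 * (f t ⬝ᵥ A *ᵥ f')) t := by
  convert hf.dotProduct (hf.mulVec A) using 1
  rw [hA.dotProduct_mulVec_comm, two_mul]

theorem HasDerivAt.dotProduct_self {f : 𝕜 → ι → 𝕜} {f' : ι → 𝕜} {t : 𝕜} (hf : HasDerivAt f f' t) :
    HasDerivAt (fun s => f s ⬝ᵥ f s) (2 * (f t ⬝ᵥ f')) t := by
  convert hf.dotProduct hf using 1
  rw [dotProduct_comm, two_mul]

theorem dissipation_nonneg {BH BA : Matrix ι ι ℝ} (hBA : BA.PosSemidef)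
    (hB : (BH - (1/4 : ℝ) • BA).PosSemidef) (x y : ι → ℝ) :
    0 ≤ x ⬝ᵥ BH *ᵥ x - y ⬝ᵥ BA *ᵥ x + y ⬝ᵥ BA *ᵥ y := by
  have hx := hB.dotProduct_mulVec_nonneg x
  have hxy := hBA.dotProduct_mulVec_nonneg (y - (1/2 : ℝ) • x)
  have hsymm := (isHermitian_iff_isSymm.mp hBA.isHermitian).dotProduct_mulVec_comm x y
  simp only [star_trivial, sub_mulVec, smul_mulVec, mulVec_sub, mulVec_smul, dotProduct_sub,
    sub_dotProduct, dotProduct_smul, smul_dotProduct, smul_eq_mul] at hx hxy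
  linarith

theorem stmt18_general (mH : ℝ) (hmH : 0 < mH)
    (MA BH BA K : Matrix (Fin 3) (Fin 3) ℝ)
    (hMAs : MA.IsSymm) (hKs : K.IsSymm)
    (hMA : MA.PosDef) (hBA : BA.PosDef)
    (vH vR eR fc : ℝ → Fin 3 → ℝ) (uH δ γref : Fin 3 → ℝ) (E : ℝ → ℝ) (t : ℝ)
    (hplanar : vH t ⬝ᵥ γref = 0)
    (hvH : HasDerivAt vH (mH⁻¹ • (-(BH *ᵥ vH t) + fc t + uH)) t)
    (hvR : HasDerivAt vR
      (MA⁻¹ *ᵥ (BA *ᵥ (vH t - vR t) - fc t + K *ᵥ eR t + γref + δ)) t)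
    (heR : HasDerivAt eR (-(vR t)) t)
    (hE : HasDerivAt E ((vR t - vH t) ⬝ᵥ (fc t - γref)) t) :
    HasDerivAt
      (fun s => mH / 2 * (vH s ⬝ᵥ vH s) + 1 / 2 * (vR s ⬝ᵥ (MA *ᵥ vR s))
        + 1 / 2 * (eR s ⬝ᵥ (K *ᵥ eR s)) + E s)
      (-(vH t ⬝ᵥ (BH *ᵥ vH t)) + vR t ⬝ᵥ (BA *ᵥ vH t) - vR t ⬝ᵥ (BA *ᵥ vR t)
        + vH t ⬝ᵥ uH + vR t ⬝ᵥ δ) t ∧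
    ((BH - (1/4 : ℝ) • BA).PosDef →
      -(vH t ⬝ᵥ (BH *ᵥ vH t)) + vR t ⬝ᵥ (BA *ᵥ vH t) - vR t ⬝ᵥ (BA *ᵥ vR t)
        + vH t ⬝ᵥ uH + vR t ⬝ᵥ δ ≤ vH t ⬝ᵥ uH + vR t ⬝ᵥ δ) := by
  constructor
  · have hV := (((hvH.dotProduct_self.const_mul (mH / 2)).add
      ((hvR.dotProduct_mulVec_self hMAs).const_mul (1 / 2))).add
      ((heR.dotProduct_mulVec_self hKs).const_mul (1 / 2))).add hE
    refine hV.congr_deriv ?_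
    rw [mulVec_mulVec, mul_nonsing_inv _ hMA.det_pos.ne'.isUnit, one_mulVec, mulVec_neg,
      dotProduct_neg, hKs.dotProduct_mulVec_comm (eR t)]
    simp only [dotProduct_smul, smul_eq_mul, dotProduct_add, dotProduct_sub, dotProduct_neg,
      sub_dotProduct, mulVec_sub, hplanar]
    field_simp
    ring
  · intro hB
    linarith [dissipation_nonneg hBA.posSemidef hB.posSemidef (vH t) (vR t)]

/-- Output-strict passivity: along the coupled dynamics
`m_H v̇_H = -B_H v_H + f_c + u_H` (planar, so `v_Hᵀγ_ref = 0`) and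
`M_A v̇_R = B_A(v_H - v_R) - f_c + K e_R + γ_ref + δ` with `ė_R = -v_R`, the
storage function `V = ½m_H‖v_H‖² + ½v_RᵀM_A v_R + ½e_RᵀK e_R + E` (where `E` is
the elastic potential minus `lᵀγ_ref`, with `Ė = (v_R - v_H)ᵀ(f_c - γ_ref)`)
satisfies `V̇ = -yᵀB y + yᵀu` where `y = (v_H, v_R)`, `u = (u_H, δ)` and
`B = [[B_H, -½B_A],[-½B_A, B_A]]`; in particular, if `B_H - ¼B_A ≻ 0` then
`V̇ ≤ yᵀu`, i.e. the system is output-strictly passive. -/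
theorem stmt18 (mH : ℝ) (hmH : 0 < mH)
    (MA BH BA K : Matrix (Fin 3) (Fin 3) ℝ)
    (hMAs : MA.IsSymm) (hBHs : BH.IsSymm) (hBAs : BA.IsSymm) (hKs : K.IsSymm)
    (hMA : MA.PosDef) (hBH : BH.PosDef) (hBA : BA.PosDef)
    (vH vR eR fc : ℝ → Fin 3 → ℝ) (uH δ γref : Fin 3 → ℝ) (E : ℝ → ℝ) (t : ℝ)
    (hplanar : vH t ⬝ᵥ γref = 0)
    (hvH : HasDerivAt vH (mH⁻¹ • (-(BH *ᵥ vH t) + fc t + uH)) t)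
    (hvR : HasDerivAt vR
      (MA⁻¹ *ᵥ (BA *ᵥ (vH t - vR t) - fc t + K *ᵥ eR t + γref + δ)) t)
    (heR : HasDerivAt eR (-(vR t)) t)
    (hE : HasDerivAt E ((vR t - vH t) ⬝ᵥ (fc t - γref)) t) :
    HasDerivAt
      (fun s => mH / 2 * (vH s ⬝ᵥ vH s) + 1 / 2 * (vR s ⬝ᵥ (MA *ᵥ vR s))
        + 1 / 2 * (eR s ⬝ᵥ (K *ᵥ eR s)) + E s)
      (-(vH t ⬝ᵥ (BH *ᵥ vH t)) + vR t ⬝ᵥ (BA *ᵥ vH t) - vR t ⬝ᵥ (BA *ᵥ vR t)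
        + vH t ⬝ᵥ uH + vR t ⬝ᵥ δ) t ∧
    ((BH - (1/4 : ℝ) • BA).PosDef →
      -(vH t ⬝ᵥ (BH *ᵥ vH t)) + vR t ⬝ᵥ (BA *ᵥ vH t) - vR t ⬝ᵥ (BA *ᵥ vR t)
        + vH t ⬝ᵥ uH + vR t ⬝ᵥ δ ≤ vH t ⬝ᵥ uH + vR t ⬝ᵥ δ) :=
  stmt18_general mH hmH MA BH BA K hMAs hKs hMA hBA vH vR eR fc uH δ γref E t hplanar hvH hvR heR hE
end
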